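/- arXiv:1109.4582 — 5 statements merged into one kernel-verified Lean document; each statement's English description precedes it below -/
import Mathlib

section
/- For the set N of integers expressible as a sum of two squares, ordered as 0 < n_1 < n_2 < ..., every gap satisfies n_{k+1} - n_k ≪ n_k^{1/4}; i.e., there exists a constant C such that for all k, n_{k+1} - n_k ≤ C · n_k^{1/4}. -/
/-- The set of positive integers expressible as a sum of two squares,
ordered increasingly as `n_1 < n_2 < ...` (via `Nat.nth`), has all gaps
bounded by `C · n_k^{1/4}`. -/
theorem sum_two_squares_gaps
    (p : ℕ → Prop) (hp : ∀ m, p m ↔ 0 < m ∧ ∃ x y : ℤ, (m : ℤ) = x ^ 2 + y ^ 2) :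
    ∃ C : ℝ, 0 < C ∧ ∀ k : ℕ,
      (Nat.nth p (k + 1) : ℝ) - (Nat.nth p k : ℝ) ≤
        C * (Nat.nth p k : ℝ) ^ ((1 : ℝ) / 4) := by
  have hinf : (setOf p).Infinite := by
    apply Set.infinite_of_injective_forall_mem (f := fun j : ℕ => (j + 1) ^ 2)
    · intro a b h
      simp only at h
      nlinarith [h]
    · intro j
      show p ((j + 1) ^ 2); rw [hp]
      exact ⟨by positivity, (j + 1 : ℤ), 0, by push_cast; ring⟩
  refine ⟨4, by norm_num, fun k => ?_⟩
  set n := Nat.nth p k with hn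
  have hpn : p n := Nat.nth_mem_of_infinite hinf k
  have hn0 : 0 < n := ((hp n).mp hpn).1
  set a := Nat.sqrt n with ha
  set r := n - a * a with hr
  set s := Nat.sqrt r with hs
  set m := a * a + (s + 1) * (s + 1) with hm
  have haa : a * a ≤ n := by simpa [pow_two] using Nat.sqrt_le' n
  have han : n < (a + 1) * (a + 1) := by simpa [pow_two, Nat.succ_eq_add_one] using Nat.lt_succ_sqrt' n
  have hss : s * s ≤ r := by simpa [pow_two] using Nat.sqrt_le' r
  have hrs : r < (s + 1) * (s + 1) := by simpa [pow_two, Nat.succ_eq_add_one] using Nat.lt_succ_sqrt' r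
  -- linearize the products
  have e1 : (a + 1) * (a + 1) = a * a + 2 * a + 1 := by ring
  have e2 : (s + 1) * (s + 1) = s * s + 2 * s + 1 := by ring
  have hra : r ≤ 2 * a := by omega
  have hnm : n < m := by omega
  have hgap : m - n ≤ 2 * s + 1 := by omega
  have hmz : (m : ℤ) = (a : ℤ) ^ 2 + ((s : ℤ) + 1) ^ 2 := by rw [hm]; push_cast; ring
  have hpm : p m := (hp m).mpr ⟨by omega, (a : ℤ), ((s : ℤ) + 1), hmz⟩
  have hle : Nat.nth p (k + 1) ≤ m := by
    by_contra h
    push_neg at h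
    exact absurd (Nat.le_nth_of_lt_nth_succ h hpm) (by omega)
  -- real estimates
  have hn1 : (1 : ℝ) ≤ (n : ℝ) := by exact_mod_cast hn0
  have hnnn : (0 : ℝ) ≤ (n : ℝ) := by linarith
  have hquart : (1 : ℝ) ≤ (n : ℝ) ^ ((1 : ℝ) / 4) :=
    Real.one_le_rpow hn1 (by norm_num)
  have hsr : (s : ℝ) ≤ Real.sqrt r := by
    rw [show (s : ℝ) = Real.sqrt ((s : ℝ) * (s : ℝ)) from (Real.sqrt_mul_self (by positivity)).symm]
    exact Real.sqrt_le_sqrt (by exact_mod_cast hss)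
  have hansqrt : (a : ℝ) ≤ Real.sqrt n := by
    rw [show (a : ℝ) = Real.sqrt ((a : ℝ) * (a : ℝ)) from (Real.sqrt_mul_self (by positivity)).symm]
    exact Real.sqrt_le_sqrt (by exact_mod_cast haa)
  have hr2 : (r : ℝ) ≤ 2 * Real.sqrt n := by
    have : (r : ℝ) ≤ 2 * (a : ℝ) := by exact_mod_cast hra
    linarith
  have hsb : (s : ℝ) ≤ Real.sqrt 2 * (n : ℝ) ^ ((1 : ℝ) / 4) := by
    have h1 : Real.sqrt r ≤ Real.sqrt (2 * Real.sqrt n) := Real.sqrt_le_sqrt hr2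
    have h2 : Real.sqrt (2 * Real.sqrt n) = Real.sqrt 2 * Real.sqrt (Real.sqrt n) :=
      Real.sqrt_mul (by norm_num) _
    have h3 : Real.sqrt (Real.sqrt n) = (n : ℝ) ^ ((1 : ℝ) / 4) := by
      rw [Real.sqrt_eq_rpow, Real.sqrt_eq_rpow, ← Real.rpow_mul hnnn]
      norm_num
    calc (s : ℝ) ≤ Real.sqrt r := hsr
      _ ≤ Real.sqrt (2 * Real.sqrt n) := h1
      _ = Real.sqrt 2 * (n : ℝ) ^ ((1 : ℝ) / 4) := by rw [h2, h3]
  have hsqrt2 : Real.sqrt 2 ≤ 1.5 := by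
    rw [show (1.5 : ℝ) = Real.sqrt (1.5 ^ 2) by rw [Real.sqrt_sq]; norm_num]
    exact Real.sqrt_le_sqrt (by norm_num)
  -- conclude
  have hcast : (Nat.nth p (k + 1) : ℝ) ≤ (m : ℝ) := by exact_mod_cast hle
  have hgapR : (m : ℝ) - (n : ℝ) ≤ 2 * (s : ℝ) + 1 := by
    have : (m - n : ℕ) ≤ 2 * s + 1 := hgap
    have h' : ((m - n : ℕ) : ℝ) = (m : ℝ) - (n : ℝ) := by
      rw [Nat.cast_sub hnm.le]
    rw [← h']
    exact_mod_cast this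
  have : 2 * (s : ℝ) + 1 ≤ 4 * (n : ℝ) ^ ((1 : ℝ) / 4) := by
    have : 2 * (s : ℝ) ≤ 2 * (Real.sqrt 2 * (n : ℝ) ^ ((1 : ℝ) / 4)) := by linarith
    nlinarith [hquart, hsqrt2, Real.sqrt_nonneg 2]
  linarith
end

section
/- Fix a unimodular lattice L ⊂ ℝ², a nonzero ζ ∈ L, and 0 < δ < 1/2. Then the number of lattice points η ∈ L with |⟨η, ζ⟩| ≤ |η|^{2δ} and |η|² ≤ X is at most 4X^{1/2+δ}/|ζ| + O_L(X^{1/2}). -/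
open MeasureTheory Set ENNReal

noncomputable def mat2lin (p q r s : ℝ) : (ℝ × ℝ) →ₗ[ℝ] (ℝ × ℝ) :=
  Matrix.toLin (Module.Basis.finTwoProd ℝ) (Module.Basis.finTwoProd ℝ) !![p, q; r, s]

lemma mat2lin_apply (p q r s : ℝ) (x : ℝ × ℝ) :
    mat2lin p q r s x = (p * x.1 + q * x.2, r * x.1 + s * x.2) := by
  simp [mat2lin]

lemma mat2lin_det (p q r s : ℝ) :
    LinearMap.det (mat2lin p q r s) = p * s - q * r := by
  rw [mat2lin, LinearMap.det_toLin, Matrix.det_fin_two_of]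

/-- Integer points mapped by a unimodular 2×2 matrix into the rectangle
`[-a,a] × [-b,b]` : the set is finite. -/
lemma unimod_rect_finite (p q r s a b : ℝ) (hdet : |p * s - q * r| = 1) :
    {z : ℤ × ℤ | |p * z.1 + q * z.2| ≤ a ∧ |r * z.1 + s * z.2| ≤ b}.Finite := by
  set N : ℤ := ⌈|s| * a + |q| * b + (|r| * a + |p| * b)⌉ with hN
  apply Set.Finite.subset (Set.finite_Icc ((-N, -N) : ℤ × ℤ) (N, N))
  rintro z ⟨h1, h2⟩
  have key : ∀ u v : ℝ, (|u| ≤ |s| * a + |q| * b + (|r| * a + |p| * b)) → u = v → True := fun _ _ _ _ => trivial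
  have e1 : (z.1 : ℝ) * (p * s - q * r) = s * (p * z.1 + q * z.2) - q * (r * z.1 + s * z.2) := by ring
  have e2 : (z.2 : ℝ) * (p * s - q * r) = p * (r * z.1 + s * z.2) - r * (p * z.1 + q * z.2) := by ring
  have hb0 : 0 ≤ b := le_trans (abs_nonneg _) h2
  have ha0 : 0 ≤ a := le_trans (abs_nonneg _) h1
  have b1 : |(z.1 : ℝ)| ≤ |s| * a + |q| * b := by
    calc |(z.1 : ℝ)| = |(z.1 : ℝ)| * |p * s - q * r| := by rw [hdet, mul_one]
      _ = |(z.1 : ℝ) * (p * s - q * r)| := (abs_mul _ _).symm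
      _ = |s * (p * z.1 + q * z.2) - q * (r * z.1 + s * z.2)| := by rw [e1]
      _ ≤ |s * (p * z.1 + q * z.2)| + |q * (r * z.1 + s * z.2)| := abs_sub _ _
      _ = |s| * |p * z.1 + q * z.2| + |q| * |r * z.1 + s * z.2| := by rw [abs_mul, abs_mul]
      _ ≤ |s| * a + |q| * b := by gcongr
  have b2 : |(z.2 : ℝ)| ≤ |r| * a + |p| * b := by
    calc |(z.2 : ℝ)| = |(z.2 : ℝ)| * |p * s - q * r| := by rw [hdet, mul_one]
      _ = |(z.2 : ℝ) * (p * s - q * r)| := (abs_mul _ _).symm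
      _ = |p * (r * z.1 + s * z.2) - r * (p * z.1 + q * z.2)| := by rw [e2]
      _ ≤ |p * (r * z.1 + s * z.2)| + |r * (p * z.1 + q * z.2)| := abs_sub _ _
      _ = |p| * |r * z.1 + s * z.2| + |r| * |p * z.1 + q * z.2| := by rw [abs_mul, abs_mul]
      _ ≤ |p| * b + |r| * a := by gcongr
      _ = |r| * a + |p| * b := by ring
  have hz1 : |(z.1 : ℝ)| ≤ (N : ℝ) := by
    refine b1.trans (le_trans ?_ (Int.le_ceil _))
    have : 0 ≤ |r| * a + |p| * b := by positivity
    linarith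
  have hz2 : |(z.2 : ℝ)| ≤ (N : ℝ) := by
    refine b2.trans (le_trans ?_ (Int.le_ceil _))
    have : 0 ≤ |s| * a + |q| * b := by positivity
    linarith
  have hz1' : |z.1| ≤ N := by exact_mod_cast (by push_cast; exact hz1 : (|z.1| : ℝ) ≤ (N:ℝ))
  have hz2' : |z.2| ≤ N := by exact_mod_cast (by push_cast; exact hz2 : (|z.2| : ℝ) ≤ (N:ℝ))
  rw [Set.mem_Icc]
  constructor <;> constructor <;> simp_all [abs_le, Prod.le_def] <;> omega


lemma unimod_rect_count (p q r s a b : ℝ) (hdet : |p * s - q * r| = 1)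
    (ha : 0 ≤ a) (hb : 0 ≤ b)
    (hfin : {z : ℤ × ℤ | |p * z.1 + q * z.2| ≤ a ∧ |r * z.1 + s * z.2| ≤ b}.Finite) :
    ({z : ℤ × ℤ | |p * z.1 + q * z.2| ≤ a ∧ |r * z.1 + s * z.2| ≤ b}.ncard : ℝ) ≤
      (2 * a + 2 * (|p| + |q| + |r| + |s|)) * (2 * b + 2 * (|p| + |q| + |r| + |s|)) := by
  set c : ℝ := |p| + |q| + |r| + |s| with hc
  have hc0 : 0 ≤ c := by positivity
  have hD : p * s - q * r ≠ 0 := by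
    intro h; rw [h] at hdet; simp at hdet
  set f := mat2lin p q r s with hf
  -- injectivity
  have hinj : Function.Injective f := by
    intro x y hxy
    rw [hf, mat2lin_apply, mat2lin_apply, Prod.ext_iff] at hxy
    obtain ⟨h1, h2⟩ := hxy
    dsimp only at h1 h2
    have e1 : (x.1 - y.1) * (p * s - q * r)
        = s * ((p * x.1 + q * x.2) - (p * y.1 + q * y.2))
          - q * ((r * x.1 + s * x.2) - (r * y.1 + s * y.2)) := by ring
    have e2 : (x.2 - y.2) * (p * s - q * r)
        = p * ((r * x.1 + s * x.2) - (r * y.1 + s * y.2))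
          - r * ((p * x.1 + q * x.2) - (p * y.1 + q * y.2)) := by ring
    rw [h1, h2] at e1 e2
    simp only [sub_self, mul_zero, sub_zero, zero_sub, neg_zero] at e1 e2
    have hx1 : x.1 = y.1 := by
      have := mul_eq_zero.mp e1
      rcases this with h | h
      · linarith [sub_eq_zero.mp h]
      · exact absurd h hD
    have hx2 : x.2 = y.2 := by
      have := mul_eq_zero.mp e2
      rcases this with h | h
      · linarith [sub_eq_zero.mp h]
      · exact absurd h hD
    exact Prod.ext hx1 hx2
  -- boxes
  set V : ℤ × ℤ → Set (ℝ × ℝ) := fun z =>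
    f '' (Set.Ico (z.1 : ℝ) (z.1 + 1) ×ˢ Set.Ico (z.2 : ℝ) (z.2 + 1)) with hV
  have hdetf : LinearMap.det f ≠ 0 := by rw [hf, mat2lin_det]; exact hD
  have himg : ∀ S : Set (ℝ × ℝ), f '' S
      = (f.equivOfDetNeZero hdetf).toContinuousLinearEquiv.symm ⁻¹' S := by
    intro S
    rw [← ContinuousLinearEquiv.image_eq_preimage_symm]
    rfl
  have hmeas : ∀ z, MeasurableSet (V z) := by
    intro z
    rw [hV]
    simp only
    rw [himg]
    exact (f.equivOfDetNeZero hdetf).toContinuousLinearEquiv.symm.continuous.measurable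
      (measurableSet_Ico.prod measurableSet_Ico)
  have hvol : ∀ z, volume (V z) = 1 := by
    intro z
    rw [hV]
    simp only
    rw [Measure.addHaar_image_linearMap, hf, mat2lin_det, hdet,
      Measure.volume_eq_prod, Measure.prod_prod, Real.volume_Ico, Real.volume_Ico]
    simp
  have hdisj : ∀ z w : ℤ × ℤ, z ≠ w → Disjoint (V z) (V w) := by
    intro z w hzw
    rw [hV, Set.disjoint_left]
    rintro x ⟨u, hu, rfl⟩ ⟨v, hv, huv⟩
    have huv' : v = u := hinj huv
    subst huv'
    rw [Set.mem_prod] at hu hv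
    obtain ⟨⟨hu1, hu1'⟩, ⟨hu2, hu2'⟩⟩ := hu
    obtain ⟨⟨hv1, hv1'⟩, ⟨hv2, hv2'⟩⟩ := hv
    apply hzw
    have h1 : z.1 = w.1 := by
      have a1 : (z.1 : ℝ) < (w.1 : ℝ) + 1 := lt_of_le_of_lt hu1 hv1'
      have a2 : (w.1 : ℝ) < (z.1 : ℝ) + 1 := lt_of_le_of_lt hv1 hu1'
      have b1 : z.1 < w.1 + 1 := by exact_mod_cast a1
      have b2 : w.1 < z.1 + 1 := by exact_mod_cast a2
      omega
    have h2 : z.2 = w.2 := by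
      have a1 : (z.2 : ℝ) < (w.2 : ℝ) + 1 := lt_of_le_of_lt hu2 hv2'
      have a2 : (w.2 : ℝ) < (z.2 : ℝ) + 1 := lt_of_le_of_lt hv2 hu2'
      have b1 : z.2 < w.2 + 1 := by exact_mod_cast a1
      have b2 : w.2 < z.2 + 1 := by exact_mod_cast a2
      omega
    exact Prod.ext h1 h2
  -- boxes of points of T are contained in the enlarged rectangle
  have hsub : ∀ z ∈ hfin.toFinset,
      V z ⊆ Set.Icc (-(a + c)) (a + c) ×ˢ Set.Icc (-(b + c)) (b + c) := by
    intro z hz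
    rw [Set.Finite.mem_toFinset] at hz
    obtain ⟨hz1, hz2⟩ := hz
    rw [hV]
    rintro x ⟨u, hu, rfl⟩
    rw [Set.mem_prod] at hu
    obtain ⟨⟨hu1, hu1'⟩, ⟨hu2, hu2'⟩⟩ := hu
    have d1 : |u.1 - (z.1 : ℝ)| ≤ 1 := abs_le.mpr ⟨by linarith, by linarith⟩
    have d2 : |u.2 - (z.2 : ℝ)| ≤ 1 := abs_le.mpr ⟨by linarith, by linarith⟩
    rw [hf, mat2lin_apply, Set.mem_prod]
    constructor
    · rw [Set.mem_Icc, ← abs_le]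
      have e : p * u.1 + q * u.2
          = (p * (z.1 : ℝ) + q * (z.2 : ℝ)) + (p * (u.1 - (z.1 : ℝ)) + q * (u.2 - (z.2 : ℝ))) := by
        ring
      calc |p * u.1 + q * u.2|
          ≤ |p * (z.1 : ℝ) + q * (z.2 : ℝ)| + (|p * (u.1 - (z.1 : ℝ))| + |q * (u.2 - (z.2 : ℝ))|) := by
            rw [e]; exact (abs_add_le _ _).trans (by gcongr; exact abs_add_le _ _)
        _ ≤ a + (|p| * 1 + |q| * 1) := by
            rw [abs_mul, abs_mul]
            gcongr
        _ ≤ a + c := by rw [hc]; have := abs_nonneg r; have := abs_nonneg s; nlinarith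
    · rw [Set.mem_Icc, ← abs_le]
      have e : r * u.1 + s * u.2
          = (r * (z.1 : ℝ) + s * (z.2 : ℝ)) + (r * (u.1 - (z.1 : ℝ)) + s * (u.2 - (z.2 : ℝ))) := by
        ring
      calc |r * u.1 + s * u.2|
          ≤ |r * (z.1 : ℝ) + s * (z.2 : ℝ)| + (|r * (u.1 - (z.1 : ℝ))| + |s * (u.2 - (z.2 : ℝ))|) := by
            rw [e]; exact (abs_add_le _ _).trans (by gcongr; exact abs_add_le _ _)
        _ ≤ b + (|r| * 1 + |s| * 1) := by
            rw [abs_mul, abs_mul]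
            gcongr
        _ ≤ b + c := by rw [hc]; have := abs_nonneg p; have := abs_nonneg q; nlinarith
  -- volume counting
  have hcard : (hfin.toFinset.card : ℝ≥0∞) ≤ ENNReal.ofReal ((2 * a + 2 * c) * (2 * b + 2 * c)) := by
    calc (hfin.toFinset.card : ℝ≥0∞) = ∑ z ∈ hfin.toFinset, volume (V z) := by
          simp [hvol]
      _ = volume (⋃ z ∈ hfin.toFinset, V z) :=
          (measure_biUnion_finset (fun z _ w _ hzw => hdisj z w hzw) fun z _ => hmeas z).symm
      _ ≤ volume (Set.Icc (-(a + c)) (a + c) ×ˢ Set.Icc (-(b + c)) (b + c)) :=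
          measure_mono (Set.iUnion₂_subset hsub)
      _ = ENNReal.ofReal (2 * (a + c)) * ENNReal.ofReal (2 * (b + c)) := by
          rw [Measure.volume_eq_prod, Measure.prod_prod, Real.volume_Icc, Real.volume_Icc]
          congr 1 <;> ring_nf
      _ = ENNReal.ofReal ((2 * a + 2 * c) * (2 * b + 2 * c)) := by
          rw [← ENNReal.ofReal_mul (by positivity)]
          congr 1
          ring
  rw [Set.ncard_eq_toFinset_card _ hfin]
  rw [← ENNReal.ofReal_natCast (hfin.toFinset.card)] at hcard
  rw [ENNReal.ofReal_le_ofReal_iff (by positivity)] at hcard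
  simpa using hcard


set_option maxHeartbeats 1000000 in
/-- Counting lattice points nearly orthogonal to a fixed nonzero lattice
vector `ζ`: for a unimodular lattice `L ⊂ ℝ²`, the number of `η ∈ L` with
`|⟨η,ζ⟩| ≤ |η|^{2δ}` and `|η|² ≤ X` is at most `4X^{1/2+δ}/|ζ| + O_L(X^{1/2})`. -/
theorem nearly_orthogonal_lattice_count
    (b₁ b₂ : ℝ × ℝ) (hdet : |b₁.1 * b₂.2 - b₁.2 * b₂.1| = 1)
    (L : Set (ℝ × ℝ))
    (hL : L = {ξ | ∃ m n : ℤ, ξ = (m : ℝ) • b₁ + (n : ℝ) • b₂})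
    (ζ : ℝ × ℝ) (hζL : ζ ∈ L) (hζ : ζ ≠ 0)
    (δ : ℝ) (hδ0 : 0 < δ) (hδ : δ < 1 / 2) :
    ∃ C : ℝ, ∀ X : ℝ, 1 ≤ X →
      ({η ∈ L | |η.1 * ζ.1 + η.2 * ζ.2| ≤ (η.1 ^ 2 + η.2 ^ 2) ^ δ ∧
          η.1 ^ 2 + η.2 ^ 2 ≤ X}.ncard : ℝ) ≤
        4 * X ^ (1 / 2 + δ) / Real.sqrt (ζ.1 ^ 2 + ζ.2 ^ 2) + C * X ^ ((1 : ℝ) / 2) := by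
  have hnorm_pos : 0 < ζ.1 ^ 2 + ζ.2 ^ 2 := by
    have h : ζ.1 ≠ 0 ∨ ζ.2 ≠ 0 := by
      by_contra h
      push_neg at h
      exact hζ (Prod.ext h.1 h.2)
    rcases h with h | h <;> positivity
  have hnζpos : 0 < Real.sqrt (ζ.1 ^ 2 + ζ.2 ^ 2) := Real.sqrt_pos.mpr hnorm_pos
  set nζ : ℝ := Real.sqrt (ζ.1 ^ 2 + ζ.2 ^ 2) with hnζeq
  have hnsq : nζ ^ 2 = ζ.1 ^ 2 + ζ.2 ^ 2 := Real.sq_sqrt hnorm_pos.le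
  set c1 : ℝ := ζ.1 / nζ with hc1
  set c2 : ℝ := ζ.2 / nζ with hc2
  have hc12 : c1 ^ 2 + c2 ^ 2 = 1 := by
    rw [hc1, hc2, div_pow, div_pow, ← add_div, ← hnsq, div_self (by positivity)]
  set P : ℝ := c1 * b₁.1 + c2 * b₁.2 with hP
  set Q : ℝ := c1 * b₂.1 + c2 * b₂.2 with hQ
  set R : ℝ := -c2 * b₁.1 + c1 * b₁.2 with hR
  set S : ℝ := -c2 * b₂.1 + c1 * b₂.2 with hS
  have hDet : |P * S - Q * R| = 1 := by
    have e : P * S - Q * R = b₁.1 * b₂.2 - b₁.2 * b₂.1 := by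
      have e' : P * S - Q * R = (c1 ^ 2 + c2 ^ 2) * (b₁.1 * b₂.2 - b₁.2 * b₂.1) := by
        rw [hP, hQ, hR, hS]; ring
      rw [e', hc12, one_mul]
    rw [e, hdet]
  set c : ℝ := |P| + |Q| + |R| + |S| with hcdef
  have hc0 : 0 ≤ c := by positivity
  refine ⟨4 * c / nζ + 4 * c + 4 * c ^ 2, ?_⟩
  intro X hX
  have hX0 : 0 < X := lt_of_lt_of_le one_pos hX
  have ha0 : 0 ≤ X ^ δ / nζ := by positivity
  have hb0 : 0 ≤ Real.sqrt X := Real.sqrt_nonneg X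
  have hfin : {z : ℤ × ℤ | |P * z.1 + Q * z.2| ≤ X ^ δ / nζ ∧
      |R * z.1 + S * z.2| ≤ Real.sqrt X}.Finite :=
    unimod_rect_finite P Q R S _ _ hDet
  have hcount : ({z : ℤ × ℤ | |P * z.1 + Q * z.2| ≤ X ^ δ / nζ ∧
      |R * z.1 + S * z.2| ≤ Real.sqrt X}.ncard : ℝ) ≤
      (2 * (X ^ δ / nζ) + 2 * c) * (2 * Real.sqrt X + 2 * c) :=
    unimod_rect_count P Q R S _ _ hDet ha0 hb0 hfin
  have hincl : {η ∈ L | |η.1 * ζ.1 + η.2 * ζ.2| ≤ (η.1 ^ 2 + η.2 ^ 2) ^ δ ∧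
      η.1 ^ 2 + η.2 ^ 2 ≤ X} ⊆
      (fun z : ℤ × ℤ => ((z.1 : ℝ)) • b₁ + ((z.2 : ℝ)) • b₂) ''
        {z : ℤ × ℤ | |P * z.1 + Q * z.2| ≤ X ^ δ / nζ ∧
          |R * z.1 + S * z.2| ≤ Real.sqrt X} := by
    rintro η ⟨hηL, h1, h2⟩
    rw [hL] at hηL
    obtain ⟨m, n, hrep⟩ := hηL
    have hη1 : η.1 = m * b₁.1 + n * b₂.1 := by rw [hrep]; simp
    have hη2 : η.2 = m * b₁.2 + n * b₂.2 := by rw [hrep]; simp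
    have hηsq : 0 ≤ η.1 ^ 2 + η.2 ^ 2 := by positivity
    refine ⟨(m, n), ⟨?_, ?_⟩, hrep.symm⟩
    · have key : P * (m : ℝ) + Q * (n : ℝ) = (η.1 * ζ.1 + η.2 * ζ.2) / nζ := by
        rw [hη1, hη2, hP, hQ, hc1, hc2]
        field_simp
        ring
      show |P * (m : ℝ) + Q * (n : ℝ)| ≤ X ^ δ / nζ
      rw [key, abs_div, abs_of_pos hnζpos]
      refine (div_le_div_iff_of_pos_right hnζpos).mpr ?_
      exact h1.trans (Real.rpow_le_rpow hηsq h2 hδ0.le)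
    · have key : R * (m : ℝ) + S * (n : ℝ) = (-ζ.2 * η.1 + ζ.1 * η.2) / nζ := by
        rw [hη1, hη2, hR, hS, hc1, hc2]
        field_simp
        ring
      show |R * (m : ℝ) + S * (n : ℝ)| ≤ Real.sqrt X
      rw [key, ← Real.sqrt_sq_eq_abs]
      apply Real.sqrt_le_sqrt
      rw [div_pow, hnsq, div_le_iff₀ hnorm_pos]
      have id1 : (-ζ.2 * η.1 + ζ.1 * η.2) ^ 2 + (ζ.1 * η.1 + ζ.2 * η.2) ^ 2
          = (ζ.1 ^ 2 + ζ.2 ^ 2) * (η.1 ^ 2 + η.2 ^ 2) := by ring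
      have id2 : (ζ.1 ^ 2 + ζ.2 ^ 2) * (η.1 ^ 2 + η.2 ^ 2) ≤ (ζ.1 ^ 2 + ζ.2 ^ 2) * X :=
        mul_le_mul_of_nonneg_left h2 hnorm_pos.le
      have id3 : 0 ≤ (ζ.1 * η.1 + ζ.2 * η.2) ^ 2 := sq_nonneg _
      linarith
  have himg_fin : ((fun z : ℤ × ℤ => ((z.1 : ℝ)) • b₁ + ((z.2 : ℝ)) • b₂) ''
      {z : ℤ × ℤ | |P * z.1 + Q * z.2| ≤ X ^ δ / nζ ∧
        |R * z.1 + S * z.2| ≤ Real.sqrt X}).Finite := hfin.image _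
  have hsqrt : Real.sqrt X = X ^ ((1 : ℝ) / 2) := Real.sqrt_eq_rpow X
  have hab : (X ^ δ / nζ) * Real.sqrt X = X ^ (1 / 2 + δ) / nζ := by
    rw [hsqrt, div_mul_eq_mul_div, ← Real.rpow_add hX0, add_comm]
  have hX1 : (1 : ℝ) ≤ X ^ ((1 : ℝ) / 2) := by
    calc (1 : ℝ) = 1 ^ ((1 : ℝ) / 2) := (Real.one_rpow _).symm
      _ ≤ X ^ ((1 : ℝ) / 2) := Real.rpow_le_rpow zero_le_one hX (by norm_num)
  have haX : X ^ δ / nζ ≤ X ^ ((1 : ℝ) / 2) / nζ := by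
    refine (div_le_div_iff_of_pos_right hnζpos).mpr ?_
    exact Real.rpow_le_rpow_of_exponent_le hX (by linarith)
  have h3 : c * (X ^ δ / nζ) ≤ c * (X ^ ((1 : ℝ) / 2) / nζ) :=
    mul_le_mul_of_nonneg_left haX hc0
  have h4 : c ^ 2 ≤ c ^ 2 * X ^ ((1 : ℝ) / 2) := by
    calc c ^ 2 = c ^ 2 * 1 := (mul_one _).symm
      _ ≤ c ^ 2 * X ^ ((1 : ℝ) / 2) := mul_le_mul_of_nonneg_left hX1 (sq_nonneg c)
  calc ({η ∈ L | |η.1 * ζ.1 + η.2 * ζ.2| ≤ (η.1 ^ 2 + η.2 ^ 2) ^ δ ∧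
          η.1 ^ 2 + η.2 ^ 2 ≤ X}.ncard : ℝ)
      ≤ (((fun z : ℤ × ℤ => ((z.1 : ℝ)) • b₁ + ((z.2 : ℝ)) • b₂) ''
          {z : ℤ × ℤ | |P * z.1 + Q * z.2| ≤ X ^ δ / nζ ∧
            |R * z.1 + S * z.2| ≤ Real.sqrt X}).ncard : ℝ) := by
        exact_mod_cast Set.ncard_le_ncard hincl himg_fin
    _ ≤ (({z : ℤ × ℤ | |P * z.1 + Q * z.2| ≤ X ^ δ / nζ ∧
            |R * z.1 + S * z.2| ≤ Real.sqrt X}).ncard : ℝ) := by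
        exact_mod_cast Set.ncard_image_le hfin
    _ ≤ (2 * (X ^ δ / nζ) + 2 * c) * (2 * Real.sqrt X + 2 * c) := hcount
    _ = 4 * ((X ^ δ / nζ) * Real.sqrt X) + 4 * (c * Real.sqrt X)
          + 4 * (c * (X ^ δ / nζ)) + 4 * c ^ 2 := by ring
    _ = 4 * (X ^ (1 / 2 + δ) / nζ) + 4 * (c * X ^ ((1 : ℝ) / 2))
          + 4 * (c * (X ^ δ / nζ)) + 4 * c ^ 2 := by rw [hab, hsqrt]
    _ ≤ 4 * (X ^ (1 / 2 + δ) / nζ) + 4 * (c * X ^ ((1 : ℝ) / 2))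
          + 4 * (c * (X ^ ((1 : ℝ) / 2) / nζ)) + 4 * (c ^ 2 * X ^ ((1 : ℝ) / 2)) := by
        linarith
    _ = 4 * X ^ (1 / 2 + δ) / nζ + (4 * c / nζ + 4 * c + 4 * c ^ 2) * X ^ ((1 : ℝ) / 2) := by
        ring
end

section
/- Let λ, L > 0, δ ∈ (0, 1/2), and ζ ∈ ℤ² nonzero with |ζ|² ≤ L/4, L ≤ λ^δ ≤ √λ/4. Suppose ξ ∈ ℤ² satisfies | |ξ|² − λ | < L and |⟨ξ, ζ⟩| > |ξ|^{2δ}. Then | |ξ − ζ|² − λ | ≥ c·L for λ large, for some absolute constant c > 0 (in fact one can take any c < 1 for λ sufficiently large). -/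
/-- The key Diophantine step: if `ξ` lies in the annulus of width `L` about
`λ` but is not nearly orthogonal to `ζ` (i.e. `|⟨ξ,ζ⟩| > |ξ|^{2δ}`), with
`|ζ|² ≤ L/4` and `L ≤ λ^δ ≤ √λ/4`, then `| |ξ−ζ|² − λ | ≥ c·L` for `λ`
large, for some absolute constant `c > 0`. -/
theorem diophantine_shifted_annulus (δ : ℝ) (hδ0 : 0 < δ) (hδ : δ < 1 / 2) :
    ∃ c : ℝ, 0 < c ∧ ∃ lam₀ : ℝ, ∀ lam : ℝ, lam₀ ≤ lam →
      ∀ L : ℝ, 0 < L → ∀ ζ : ℤ × ℤ, ζ ≠ 0 →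
        ((ζ.1 : ℝ) ^ 2 + (ζ.2 : ℝ) ^ 2) ≤ L / 4 →
        L ≤ lam ^ δ → lam ^ δ ≤ Real.sqrt lam / 4 →
        ∀ ξ : ℤ × ℤ,
          |((ξ.1 : ℝ) ^ 2 + (ξ.2 : ℝ) ^ 2) - lam| < L →
          |(ξ.1 : ℝ) * (ζ.1 : ℝ) + (ξ.2 : ℝ) * (ζ.2 : ℝ)| >
            ((ξ.1 : ℝ) ^ 2 + (ξ.2 : ℝ) ^ 2) ^ δ →
          |((ξ.1 - ζ.1 : ℤ) : ℝ) ^ 2 + ((ξ.2 - ζ.2 : ℤ) : ℝ) ^ 2 - lam| ≥ c * L := by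
  refine ⟨1/2, by norm_num, 64, ?_⟩
  intro lam hlam L hL ζ hζ hζL hLlam _ ξ hann hP
  set A := ((ξ.1 : ℝ) ^ 2 + (ξ.2 : ℝ) ^ 2) with hA
  set P := ((ξ.1 : ℝ) * (ζ.1 : ℝ) + (ξ.2 : ℝ) * (ζ.2 : ℝ)) with hPdef
  set B := ((ζ.1 : ℝ) ^ 2 + (ζ.2 : ℝ) ^ 2) with hB
  have hlam0 : (0:ℝ) < lam := by linarith
  have hlam1 : (1:ℝ) ≤ lam := by linarith
  -- lam^(1-δ) ≥ 8
  have h8 : (8:ℝ) ≤ lam ^ (1 - δ) := by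
    have h1 : lam ^ ((1:ℝ)/2) ≤ lam ^ (1 - δ) :=
      Real.rpow_le_rpow_of_exponent_le hlam1 (by linarith)
    have h2 : (8:ℝ) ≤ lam ^ ((1:ℝ)/2) := by
      rw [← Real.sqrt_eq_rpow]
      have : (8:ℝ) = Real.sqrt 64 := by
        rw [show (64:ℝ) = 8^2 by norm_num, Real.sqrt_sq (by norm_num : (0:ℝ) ≤ 8)]
      rw [this]
      exact Real.sqrt_le_sqrt hlam
    linarith
  -- lam^δ ≤ lam/8
  have hsplit : lam ^ δ * lam ^ (1 - δ) = lam := by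
    rw [← Real.rpow_add hlam0]; simp
  have hrpow_pos : (0:ℝ) < lam ^ δ := Real.rpow_pos_of_pos hlam0 δ
  have hle8 : lam ^ δ ≤ lam / 8 := by
    have : lam ^ δ * 8 ≤ lam ^ δ * lam ^ (1 - δ) := by
      apply mul_le_mul_of_nonneg_left h8 hrpow_pos.le
    rw [hsplit] at this; linarith
  -- A ≥ 7/8 lam
  have habs := abs_lt.mp hann
  have hAge : 7/8 * lam ≤ A := by linarith
  have hAd : (7/8 : ℝ) * L ≤ A ^ δ := by
    have h1 : ((7/8 : ℝ) * lam) ^ δ ≤ A ^ δ :=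
      Real.rpow_le_rpow (by linarith) hAge hδ0.le
    have h2 : ((7/8 : ℝ) * lam) ^ δ = (7/8 : ℝ) ^ δ * lam ^ δ :=
      Real.mul_rpow (by norm_num) hlam0.le
    have h3 : (7/8 : ℝ) ≤ (7/8 : ℝ) ^ δ := by
      have := Real.rpow_le_rpow_of_exponent_ge (by norm_num : (0:ℝ) < 7/8)
        (by norm_num : (7/8 : ℝ) ≤ 1) (by linarith : δ ≤ (1:ℝ))
      rwa [Real.rpow_one] at this
    have h4 : (7/8 : ℝ) * L ≤ (7/8 : ℝ) ^ δ * lam ^ δ := by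
      have := mul_le_mul h3 hLlam hL.le (by positivity)
      linarith
    linarith [h2 ▸ h1]
  have hPbig : 7/8 * L < |P| := lt_of_le_of_lt hAd hP
  have hB0 : (0:ℝ) ≤ B := by positivity
  have hexpr : ((ξ.1:ℝ) - (ζ.1:ℝ)) ^ 2 + ((ξ.2:ℝ) - (ζ.2:ℝ)) ^ 2 - lam
      = (A - lam) - 2 * P + B := by rw [hA, hPdef, hB]; ring
  push_cast
  rw [hexpr]
  rcases le_or_gt 0 P with hpos | hneg
  · rw [abs_of_nonneg hpos] at hPbig
    have h5 : (A - lam) - 2 * P + B ≤ -(1/2 * L) := by linarith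
    calc (1/2 : ℝ) * L ≤ -((A - lam) - 2 * P + B) := by linarith
    _ ≤ |(A - lam) - 2 * P + B| := neg_le_abs _
  · rw [abs_of_neg hneg] at hPbig
    calc (1/2 : ℝ) * L ≤ (A - lam) - 2 * P + B := by linarith
    _ ≤ |(A - lam) - 2 * P + B| := le_abs_self _
end

section
/- Suppose #{ξ ∈ ℤ² : |ξ|² ≤ x} = πx + O(x^θ) with θ < 1. Then for λ large and λ^θ ≤ L ≤ λ/2, the tail sum ∑_{ξ ∈ ℤ², | |ξ|²−λ | ≥ L} 1/(|ξ|² − λ)² ≪ 1/L + λ^θ/L². -/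
set_option maxHeartbeats 2000000

open Real

private lemma green_ball_finite (x : ℝ) :
    {ξ : ℤ × ℤ | ((ξ.1 : ℝ) ^ 2 + (ξ.2 : ℝ) ^ 2) ≤ x}.Finite := by
  apply Set.Finite.subset ((Set.finite_Icc (-⌈x⌉) ⌈x⌉).prod (Set.finite_Icc (-⌈x⌉) ⌈x⌉))
  rintro ⟨a, b⟩ h
  simp only [Set.mem_setOf_eq] at h
  have key : ∀ c : ℤ, (c : ℝ) ^ 2 ≤ x → c ∈ Set.Icc (-⌈x⌉) ⌈x⌉ := by
    intro c hc
    have h1 : (|c| : ℝ) ≤ (c : ℝ) ^ 2 := by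
      rcases eq_or_ne c 0 with rfl | hc0
      · simp
      · have h2 : (1 : ℤ) ≤ |c| := Int.one_le_abs hc0
        have h3 : (|c| : ℤ) ≤ |c| * |c| := le_mul_of_one_le_left (abs_nonneg c) h2
        calc (|c| : ℝ) ≤ ((|c| * |c| : ℤ) : ℝ) := by exact_mod_cast h3
          _ = (c : ℝ) ^ 2 := by push_cast [abs_mul_abs_self]; ring
    have h4 : (|c| : ℝ) ≤ (⌈x⌉ : ℝ) := h1.trans (hc.trans (Int.le_ceil x))
    have h5 : |c| ≤ ⌈x⌉ := by exact_mod_cast h4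
    rw [Set.mem_Icc]
    exact abs_le.mp h5
  have ha : (a : ℝ) ^ 2 ≤ x := by nlinarith [sq_nonneg (b : ℝ)]
  have hb : (b : ℝ) ^ 2 ≤ x := by nlinarith [sq_nonneg (a : ℝ)]
  exact Set.mem_prod.2 ⟨key a ha, key b hb⟩

/-- Tail estimate for the Green's function: assuming the circle-problem bound
with exponent `θ < 1`, for `λ` large and `λ^θ ≤ L ≤ λ/2` one has
`∑_{| |ξ|²−λ | ≥ L} (|ξ|² − λ)⁻² ≪ 1/L + λ^θ/L²`. -/
theorem green_tail_estimate (θ : ℝ) (hθ0 : 0 ≤ θ) (hθ : θ < 1)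
    (C : ℝ)
    (hcount : ∀ x : ℝ, 1 ≤ x →
      |({ξ : ℤ × ℤ | ((ξ.1 : ℝ) ^ 2 + (ξ.2 : ℝ) ^ 2) ≤ x}.ncard : ℝ) - π * x|
        ≤ C * x ^ θ) :
    ∃ C' : ℝ, 0 < C' ∧ ∃ lam₀ : ℝ, ∀ lam : ℝ, lam₀ ≤ lam →
      ∀ L : ℝ, lam ^ θ ≤ L → L ≤ lam / 2 →
        (∑' ξ : {ξ : ℤ × ℤ // L ≤ |((ξ.1 : ℝ) ^ 2 + (ξ.2 : ℝ) ^ 2) - lam|},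
            1 / ((((ξ : ℤ × ℤ).1 : ℝ)) ^ 2 + (((ξ : ℤ × ℤ).2 : ℝ)) ^ 2 - lam) ^ 2)
          ≤ C' * (1 / L + lam ^ θ / L ^ 2) := by
  have hC0 : 0 ≤ C := by
    have h := hcount 1 le_rfl
    have h0 := abs_nonneg
      (({ξ : ℤ × ℤ | ((ξ.1 : ℝ) ^ 2 + (ξ.2 : ℝ) ^ 2) ≤ (1:ℝ)}.ncard : ℝ) - π * 1)
    rw [Real.one_rpow] at h
    linarith
  set D : ℝ := π + 2 * C with hD
  have hDpos : 0 < D := by nlinarith [Real.pi_pos]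
  refine ⟨8 * (π + D), by nlinarith [Real.pi_pos], 1, ?_⟩
  intro lam hlam L hL1 hL2
  have hlam1 : (1 : ℝ) ≤ lam := hlam
  have hlamθ : (1 : ℝ) ≤ lam ^ θ := by
    calc (1 : ℝ) = lam ^ (0 : ℝ) := (Real.rpow_zero lam).symm
      _ ≤ lam ^ θ := Real.rpow_le_rpow_of_exponent_le hlam1 hθ0
  have hL1' : (1 : ℝ) ≤ L := hlamθ.trans hL1
  have hLpos : (0 : ℝ) < L := lt_of_lt_of_le one_pos hL1'
  have hLlam : L ≤ lam := hL2.trans (by linarith)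
  have hlamθ0 : (0 : ℝ) ≤ lam ^ θ := by positivity
  have hRHS0 : (0 : ℝ) ≤ 8 * (π + D) * (1 / L + lam ^ θ / L ^ 2) := by
    have h1 : (0:ℝ) ≤ 8 * (π + D) := by nlinarith [Real.pi_pos]
    have h2 : (0:ℝ) ≤ 1 / L + lam ^ θ / L ^ 2 := by positivity
    exact mul_nonneg h1 h2
  apply tsum_le_of_sum_le' hRHS0
  intro s
  set K : {ξ : ℤ × ℤ // L ≤ |((ξ.1 : ℝ) ^ 2 + (ξ.2 : ℝ) ^ 2) - lam|} → ℕ := fun ξ =>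
    ⌊Real.logb 2 (|(((ξ : ℤ × ℤ).1 : ℝ)) ^ 2 + (((ξ : ℤ × ℤ).2 : ℝ)) ^ 2 - lam| / L)⌋₊ with hK
  have hshell : ∀ ξ : {ξ : ℤ × ℤ // L ≤ |((ξ.1 : ℝ) ^ 2 + (ξ.2 : ℝ) ^ 2) - lam|},
      (2 : ℝ) ^ (K ξ) * L ≤ |(((ξ : ℤ × ℤ).1 : ℝ)) ^ 2 + (((ξ : ℤ × ℤ).2 : ℝ)) ^ 2 - lam| ∧
      |(((ξ : ℤ × ℤ).1 : ℝ)) ^ 2 + (((ξ : ℤ × ℤ).2 : ℝ)) ^ 2 - lam| <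
        (2 : ℝ) ^ (K ξ + 1) * L := by
    intro ξ
    set d := |(((ξ : ℤ × ℤ).1 : ℝ)) ^ 2 + (((ξ : ℤ × ℤ).2 : ℝ)) ^ 2 - lam| with hd
    have hdL : L ≤ d := ξ.2
    have hdpos : 0 < d / L := div_pos (lt_of_lt_of_le hLpos hdL) hLpos
    have hd1 : (1 : ℝ) ≤ d / L := (one_le_div hLpos).2 hdL
    have hlogb0 : 0 ≤ Real.logb 2 (d / L) := Real.logb_nonneg one_lt_two hd1
    constructor
    · have h1 : ((K ξ : ℝ)) ≤ Real.logb 2 (d / L) := Nat.floor_le hlogb0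
      have h2 : (2 : ℝ) ^ (K ξ) ≤ d / L := by
        calc (2 : ℝ) ^ (K ξ) = (2 : ℝ) ^ ((K ξ : ℕ) : ℝ) := (Real.rpow_natCast 2 _).symm
          _ ≤ (2 : ℝ) ^ Real.logb 2 (d / L) :=
            Real.rpow_le_rpow_of_exponent_le one_le_two h1
          _ = d / L := Real.rpow_logb two_pos (by norm_num) hdpos
      calc (2 : ℝ) ^ (K ξ) * L ≤ (d / L) * L := mul_le_mul_of_nonneg_right h2 hLpos.le
        _ = d := div_mul_cancel₀ d hLpos.ne'
    · have h1 : Real.logb 2 (d / L) < (K ξ : ℝ) + 1 := Nat.lt_floor_add_one _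
      have h2 : d / L < (2 : ℝ) ^ (K ξ + 1) := by
        calc d / L = (2 : ℝ) ^ Real.logb 2 (d / L) :=
              (Real.rpow_logb two_pos (by norm_num) hdpos).symm
          _ < (2 : ℝ) ^ (((K ξ : ℕ) + 1 : ℕ) : ℝ) := by
              apply Real.rpow_lt_rpow_of_exponent_lt one_lt_two
              push_cast
              exact h1
          _ = (2 : ℝ) ^ (K ξ + 1) := Real.rpow_natCast 2 _
      calc d = (d / L) * L := (div_mul_cancel₀ d hLpos.ne').symm
        _ < (2 : ℝ) ^ (K ξ + 1) * L := mul_lt_mul_of_pos_right h2 hLpos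
  rw [← Finset.sum_fiberwise_of_maps_to
    (t := Finset.range (s.sup K + 1)) (g := K)
    (fun ξ hξ => Finset.mem_range.2 (Nat.lt_succ_of_le (Finset.le_sup hξ)))
    (fun ξ => 1 / ((((ξ : ℤ × ℤ).1 : ℝ)) ^ 2 + (((ξ : ℤ × ℤ).2 : ℝ)) ^ 2 - lam) ^ 2)]
  have hfiber : ∀ k ∈ Finset.range (s.sup K + 1),
      (∑ ξ ∈ s.filter (fun ξ => K ξ = k),
        1 / ((((ξ : ℤ × ℤ).1 : ℝ)) ^ 2 + (((ξ : ℤ × ℤ).2 : ℝ)) ^ 2 - lam) ^ 2)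
      ≤ (1 / 2 : ℝ) ^ k * (4 * (π * L + D * lam ^ θ) / L ^ 2) := by
    intro k _
    set fib := s.filter (fun ξ => K ξ = k) with hfib
    have hterm : ∀ ξ ∈ fib,
        1 / ((((ξ : ℤ × ℤ).1 : ℝ)) ^ 2 + (((ξ : ℤ × ℤ).2 : ℝ)) ^ 2 - lam) ^ 2
          ≤ (((2 : ℝ) ^ k * L) ^ 2)⁻¹ := by
      intro ξ hξ
      have hk : K ξ = k := (Finset.mem_filter.1 hξ).2
      have hlow := (hshell ξ).1
      rw [hk] at hlow
      have hpos : (0 : ℝ) < (2 : ℝ) ^ k * L := by positivity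
      have hsq : ((2 : ℝ) ^ k * L) ^ 2 ≤
          ((((ξ : ℤ × ℤ).1 : ℝ)) ^ 2 + (((ξ : ℤ × ℤ).2 : ℝ)) ^ 2 - lam) ^ 2 := by
        rw [← sq_abs ((((ξ : ℤ × ℤ).1 : ℝ)) ^ 2 + (((ξ : ℤ × ℤ).2 : ℝ)) ^ 2 - lam)]
        exact pow_le_pow_left₀ hpos.le hlow 2
      rw [one_div]
      exact inv_anti₀ (by positivity) hsq
    have hsum1 := Finset.sum_le_card_nsmul fib _ _ hterm
    rw [nsmul_eq_mul] at hsum1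
    have hcard : ((fib.card : ℝ)) ≤ 2 ^ (k + 2) * (π * L + D * lam ^ θ) := by
      set u := lam + 2 ^ (k + 1) * L with hu
      set l := lam - 2 ^ (k + 1) * L with hl
      have hpk1 : (0 : ℝ) < 2 ^ (k + 1) := by positivity
      have hu1 : (1 : ℝ) ≤ u := by
        have : (0:ℝ) < 2 ^ (k + 1) * L := by positivity
        simp only [hu]; linarith
      have hul : u - l = 2 ^ (k + 2) * L := by
        simp only [hu, hl]; ring
      have hsubset : ((fib.image Subtype.val : Finset (ℤ × ℤ)) : Set (ℤ × ℤ)) ⊆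
          {ξ : ℤ × ℤ | ((ξ.1 : ℝ) ^ 2 + (ξ.2 : ℝ) ^ 2) ≤ u} \
          {ξ : ℤ × ℤ | ((ξ.1 : ℝ) ^ 2 + (ξ.2 : ℝ) ^ 2) ≤ l} := by
        intro ζ hζ
        rw [Finset.coe_image] at hζ
        obtain ⟨ξ, hξ, rfl⟩ := hζ
        have hk : K ξ = k := (Finset.mem_filter.1 hξ).2
        have hhigh := (hshell ξ).2
        rw [hk] at hhigh
        have habs := abs_lt.1 hhigh
        constructor
        · simp only [Set.mem_setOf_eq, hu]; linarith [habs.2]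
        · simp only [Set.mem_setOf_eq, hl, not_le]; linarith [habs.1]
      have hBufin := green_ball_finite u
      have hBlfin := green_ball_finite l
      have hBlBu : {ξ : ℤ × ℤ | ((ξ.1 : ℝ) ^ 2 + (ξ.2 : ℝ) ^ 2) ≤ l} ⊆
          {ξ : ℤ × ℤ | ((ξ.1 : ℝ) ^ 2 + (ξ.2 : ℝ) ^ 2) ≤ u} := by
        intro ζ hζ
        simp only [Set.mem_setOf_eq] at hζ ⊢
        have hlu : l ≤ u := by simp only [hu, hl]; nlinarith
        linarith
      have hcard1 : fib.card ≤
          ({ξ : ℤ × ℤ | ((ξ.1 : ℝ) ^ 2 + (ξ.2 : ℝ) ^ 2) ≤ u}.ncard -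
           {ξ : ℤ × ℤ | ((ξ.1 : ℝ) ^ 2 + (ξ.2 : ℝ) ^ 2) ≤ l}.ncard : ℕ) := by
        rw [← Set.ncard_diff hBlBu hBlfin]
        calc fib.card = (fib.image Subtype.val).card :=
              (Finset.card_image_of_injective _ Subtype.val_injective).symm
          _ = ((fib.image Subtype.val : Finset (ℤ × ℤ)) : Set (ℤ × ℤ)).ncard :=
              (Set.ncard_coe_finset _).symm
          _ ≤ _ := Set.ncard_le_ncard hsubset (hBufin.diff)
      have hmono : {ξ : ℤ × ℤ | ((ξ.1 : ℝ) ^ 2 + (ξ.2 : ℝ) ^ 2) ≤ l}.ncard ≤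
          {ξ : ℤ × ℤ | ((ξ.1 : ℝ) ^ 2 + (ξ.2 : ℝ) ^ 2) ≤ u}.ncard :=
        Set.ncard_le_ncard hBlBu hBufin
      have hcard2 : ((fib.card : ℝ)) ≤
          ({ξ : ℤ × ℤ | ((ξ.1 : ℝ) ^ 2 + (ξ.2 : ℝ) ^ 2) ≤ u}.ncard : ℝ) -
          ({ξ : ℤ × ℤ | ((ξ.1 : ℝ) ^ 2 + (ξ.2 : ℝ) ^ 2) ≤ l}.ncard : ℝ) := by
        have h := Nat.cast_le (α := ℝ) |>.2 hcard1
        rwa [Nat.cast_sub hmono] at h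
      have hBu := hcount u hu1
      rw [abs_le] at hBu
      have hu2 : u ≤ 2 ^ (k + 2) * lam := by
        have h1 : (2:ℝ) ^ (k + 1) * L ≤ 2 ^ (k + 1) * lam :=
          mul_le_mul_of_nonneg_left hLlam hpk1.le
        have h2 : (1:ℝ) ≤ 2 ^ (k + 1) := one_le_pow₀ one_le_two
        have h3 : (2:ℝ) ^ (k + 2) = 2 ^ (k + 1) + 2 ^ (k + 1) := by ring
        simp only [hu]; nlinarith
      have hu0 : (0:ℝ) ≤ u := le_trans zero_le_one hu1
      have hupow : u ^ θ ≤ 2 ^ (k + 2) * lam ^ θ := by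
        calc u ^ θ ≤ (2 ^ (k + 2) * lam) ^ θ := Real.rpow_le_rpow hu0 hu2 hθ0
          _ = ((2:ℝ) ^ (k + 2)) ^ θ * lam ^ θ :=
              Real.mul_rpow (by positivity) (by linarith)
          _ ≤ 2 ^ (k + 2) * lam ^ θ := by
              have hb : (1:ℝ) ≤ 2 ^ (k + 2) := one_le_pow₀ one_le_two
              have hbb := Real.rpow_le_rpow_of_exponent_le hb hθ.le
              rw [Real.rpow_one] at hbb
              exact mul_le_mul_of_nonneg_right hbb hlamθ0
      have hu1θ : (1:ℝ) ≤ u ^ θ := by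
        calc (1 : ℝ) = u ^ (0 : ℝ) := (Real.rpow_zero u).symm
          _ ≤ u ^ θ := Real.rpow_le_rpow_of_exponent_le hu1 hθ0
      have huθ0 : (0:ℝ) ≤ u ^ θ := by positivity
      have hkey : ((fib.card : ℝ)) ≤ π * 2 ^ (k + 2) * L + D * u ^ θ := by
        rcases le_or_gt 1 l with hl1 | hl1
        · have hBl := hcount l hl1
          rw [abs_le] at hBl
          have hlle : l ≤ u := by simp only [hu, hl]; nlinarith
          have hlθ : l ^ θ ≤ u ^ θ := Real.rpow_le_rpow (by linarith) hlle hθ0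
          have hstep : ((fib.card : ℝ)) ≤ (π * u + C * u ^ θ) - (π * l - C * l ^ θ) := by
            linarith [hcard2, hBu.2, hBl.1]
          calc ((fib.card : ℝ)) ≤ (π * u + C * u ^ θ) - (π * l - C * l ^ θ) := hstep
            _ = π * (u - l) + C * (u ^ θ + l ^ θ) := by ring
            _ ≤ π * (2 ^ (k + 2) * L) + C * (2 * u ^ θ) := by
                rw [hul]
                nlinarith
            _ = π * 2 ^ (k + 2) * L + 2 * C * u ^ θ := by ring
            _ ≤ π * 2 ^ (k + 2) * L + D * u ^ θ := by
                have hCD : 2 * C ≤ D := by simp only [hD]; linarith [Real.pi_pos]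
                nlinarith
        · have hncard0 : (0:ℝ) ≤
              ({ξ : ℤ × ℤ | ((ξ.1 : ℝ) ^ 2 + (ξ.2 : ℝ) ^ 2) ≤ l}.ncard : ℝ) := by positivity
          have h1 : ((fib.card : ℝ)) ≤ π * u + C * u ^ θ := by
            linarith [hcard2, hBu.2]
          have h2 : π * u = π * l + π * (2 ^ (k + 2) * L) := by rw [← hul]; ring
          have h3 : π * l ≤ π := by nlinarith [Real.pi_pos]
          have h4 : π ≤ π * u ^ θ := by nlinarith [Real.pi_pos]
          calc ((fib.card : ℝ)) ≤ π * u + C * u ^ θ := h1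
            _ = π * l + π * (2 ^ (k + 2) * L) + C * u ^ θ := by rw [h2]
            _ ≤ π * 2 ^ (k + 2) * L + π * u ^ θ + C * u ^ θ := by linarith
            _ ≤ π * 2 ^ (k + 2) * L + D * u ^ θ := by
                have hCD : π + C ≤ D := by simp only [hD]; linarith
                nlinarith
      calc ((fib.card : ℝ)) ≤ π * 2 ^ (k + 2) * L + D * u ^ θ := hkey
        _ ≤ π * 2 ^ (k + 2) * L + D * (2 ^ (k + 2) * lam ^ θ) := by nlinarith
        _ = 2 ^ (k + 2) * (π * L + D * lam ^ θ) := by ring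
    have hinv0 : (0:ℝ) ≤ (((2 : ℝ) ^ k * L) ^ 2)⁻¹ := by positivity
    calc (∑ ξ ∈ fib,
          1 / ((((ξ : ℤ × ℤ).1 : ℝ)) ^ 2 + (((ξ : ℤ × ℤ).2 : ℝ)) ^ 2 - lam) ^ 2)
        ≤ (fib.card : ℝ) * (((2 : ℝ) ^ k * L) ^ 2)⁻¹ := hsum1
      _ ≤ (2 ^ (k + 2) * (π * L + D * lam ^ θ)) * (((2 : ℝ) ^ k * L) ^ 2)⁻¹ :=
          mul_le_mul_of_nonneg_right hcard hinv0
      _ = (1 / 2 : ℝ) ^ k * (4 * (π * L + D * lam ^ θ) / L ^ 2) := by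
          have hpk : (0:ℝ) < (2:ℝ) ^ k := by positivity
          field_simp
          have h12 : (1/2:ℝ)^k * 2^k = 1 := by rw [← mul_pow]; norm_num
          linear_combination (-(2^k*4:ℝ)) * h12
  have hc0 : (0:ℝ) ≤ 4 * (π * L + D * lam ^ θ) / L ^ 2 := by
    have hpi := Real.pi_pos
    have h1 : (0:ℝ) ≤ π * L + D * lam ^ θ := by nlinarith
    positivity
  calc (∑ k ∈ Finset.range (s.sup K + 1), ∑ ξ ∈ s.filter (fun ξ => K ξ = k),
        1 / ((((ξ : ℤ × ℤ).1 : ℝ)) ^ 2 + (((ξ : ℤ × ℤ).2 : ℝ)) ^ 2 - lam) ^ 2)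
      ≤ ∑ k ∈ Finset.range (s.sup K + 1),
          (1 / 2 : ℝ) ^ k * (4 * (π * L + D * lam ^ θ) / L ^ 2) :=
        Finset.sum_le_sum hfiber
    _ = (∑ k ∈ Finset.range (s.sup K + 1), (1 / 2 : ℝ) ^ k) *
          (4 * (π * L + D * lam ^ θ) / L ^ 2) :=
        (Finset.sum_mul _ _ _).symm
    _ ≤ 2 * (4 * (π * L + D * lam ^ θ) / L ^ 2) :=
        mul_le_mul_of_nonneg_right (sum_geometric_two_le _) hc0
    _ ≤ 8 * (π + D) * (1 / L + lam ^ θ / L ^ 2) := by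
        have h1 : 2 * (4 * (π * L + D * lam ^ θ) / L ^ 2)
            = 8 * π / L + 8 * D * lam ^ θ / L ^ 2 := by
          field_simp
          ring
        have h2 : 8 * (π + D) * (1 / L + lam ^ θ / L ^ 2)
            = 8 * (π + D) / L + 8 * (π + D) * lam ^ θ / L ^ 2 := by ring
        rw [h1, h2]
        gcongr <;> nlinarith [Real.pi_pos, hlamθ0, hDpos]
end

section
/- For λ ∈ ℂ \ {n ∈ ℕ : n is a norm of ℤ²}, the function F(λ) = ∑_{ξ ∈ ℤ²} [1/(|ξ|² − λ) − |ξ|²/(|ξ|⁴ + 1)] converges absolutely, and restricted to real λ, F is strictly increasing on each interval (n_k, n_{k+1}) between consecutive distinct norms, with F(λ) → −∞ as λ ↓ n_k and F(λ) → +∞ as λ ↑ n_{k+1}. Consequently, for each real constant c, the equation F(λ) = c has exactly one solution in each such interval, so the solutions interlace with the norms. -/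
open Filter Set

/-- `n` is a norm of the lattice `ℤ²`, i.e. a sum of two integer squares. -/
def IsNormZ2 (n : ℕ) : Prop := ∃ ξ : ℤ × ℤ, (n : ℤ) = ξ.1 ^ 2 + ξ.2 ^ 2

/-- The spectral function `F(λ) = ∑_{ξ∈ℤ²} [1/(|ξ|²−λ) − |ξ|²/(|ξ|⁴+1)]`. -/
noncomputable def spectralF (lam : ℝ) : ℝ :=
  ∑' ξ : ℤ × ℤ,
    (1 / (((ξ.1 : ℝ) ^ 2 + (ξ.2 : ℝ) ^ 2) - lam) -
      ((ξ.1 : ℝ) ^ 2 + (ξ.2 : ℝ) ^ 2) / (((ξ.1 : ℝ) ^ 2 + (ξ.2 : ℝ) ^ 2) ^ 2 + 1))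

namespace SpectralAux

noncomputable def Nr (ξ : ℤ × ℤ) : ℝ := (ξ.1 : ℝ) ^ 2 + (ξ.2 : ℝ) ^ 2

lemma Nr_nonneg (ξ : ℤ × ℤ) : 0 ≤ Nr ξ := by unfold Nr; positivity

noncomputable def g (ξ : ℤ × ℤ) (lam : ℝ) : ℝ :=
  1 / (Nr ξ - lam) - Nr ξ / ((Nr ξ) ^ 2 + 1)

lemma spectralF_eq (lam : ℝ) : spectralF lam = ∑' ξ, g ξ lam := rfl

def mNat (ξ : ℤ × ℤ) : ℕ := (ξ.1 ^ 2 + ξ.2 ^ 2).toNat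

lemma mNat_cast (ξ : ℤ × ℤ) : (mNat ξ : ℝ) = Nr ξ := by
  have h : (0:ℤ) ≤ ξ.1 ^ 2 + ξ.2 ^ 2 := by positivity
  unfold mNat Nr
  have h2 : ((ξ.1 ^ 2 + ξ.2 ^ 2).toNat : ℤ) = ξ.1 ^ 2 + ξ.2 ^ 2 := Int.toNat_of_nonneg h
  have h3 : (((ξ.1 ^ 2 + ξ.2 ^ 2).toNat : ℤ) : ℝ) = ((ξ.1 ^ 2 + ξ.2 ^ 2 : ℤ) : ℝ) := by rw [h2]
  push_cast at h3
  rw [h3]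

lemma isNormZ2_mNat (ξ : ℤ × ℤ) : IsNormZ2 (mNat ξ) :=
  ⟨ξ, by rw [mNat, Int.toNat_of_nonneg (by positivity)]⟩

noncomputable def bb (ξ : ℤ × ℤ) : ℝ := (1 / ((ξ.1 : ℝ) ^ 2 + 1)) * (1 / ((ξ.2 : ℝ) ^ 2 + 1))

lemma bb_pos (ξ : ℤ × ℤ) : 0 < bb ξ := by unfold bb; positivity

lemma summable_aux_int : Summable (fun n : ℤ => 1 / ((n : ℝ) ^ 2 + 1)) := by
  have hnat : Summable (fun n : ℕ => 1 / ((n : ℝ) ^ 2 + 1)) := by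
    have h1 : Summable (fun n : ℕ => 1 / ((n : ℝ) + 1) ^ 2) := by
      have := (summable_nat_add_iff (f := fun n : ℕ => 1 / (n : ℝ) ^ 2) 1).2
        (Real.summable_one_div_nat_pow.2 one_lt_two)
      refine this.congr fun n => by push_cast; ring
    refine Summable.of_nonneg_of_le (fun n => by positivity) (fun n => ?_) (h1.mul_left 2)
    rw [mul_one_div, div_le_div_iff₀ (by positivity) (by positivity)]
    nlinarith [sq_nonneg ((n : ℝ) - 1)]
  refine Summable.of_nat_of_neg hnat (hnat.congr fun n => ?_)
  push_cast; ring_nf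

lemma summable_bb : Summable bb :=
  (summable_aux_int.mul_of_nonneg summable_aux_int (fun n => by positivity)
    (fun n => by positivity) : _)

lemma sq_bound (ξ : ℤ × ℤ) : ((ξ.1 : ℝ) ^ 2 + 1) * ((ξ.2 : ℝ) ^ 2 + 1) ≤ (Nr ξ + 1) ^ 2 := by
  unfold Nr; nlinarith [sq_nonneg (ξ.1 : ℝ), sq_nonneg (ξ.2 : ℝ), sq_nonneg ((ξ.1 : ℝ) * (ξ.2 : ℝ))]

noncomputable def gc (ξ : ℤ × ℤ) (lam : ℂ) : ℂ :=
  1 / ((Nr ξ : ℂ) - lam) - (Nr ξ : ℂ) / ((Nr ξ : ℂ) ^ 2 + 1)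

lemma norm_gc_le {ξ : ℤ × ℤ} {lam : ℂ} {ε b : ℝ} (hε : 0 < ε) (hb : ‖lam‖ ≤ b)
    (hd : ε * (Nr ξ + 1) ≤ ‖(Nr ξ : ℂ) - lam‖) :
    ‖gc ξ lam‖ ≤ (2 * (1 + b) / ε) * bb ξ := by
  set N := Nr ξ with hN
  have hN0 : 0 ≤ N := Nr_nonneg ξ
  have hb0 : 0 ≤ b := le_trans (norm_nonneg _) hb
  have hden2 : (0:ℝ) < N ^ 2 + 1 := by positivity
  have hsub_ne : (N : ℂ) - lam ≠ 0 := by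
    intro h
    rw [h, norm_zero] at hd
    nlinarith [hd]
  have hden2c : ((N : ℂ) ^ 2 + 1) ≠ 0 := by
    have : ((N : ℂ) ^ 2 + 1) = ((N ^ 2 + 1 : ℝ) : ℂ) := by push_cast; ring
    rw [this]
    exact_mod_cast ne_of_gt hden2
  have hgc : gc ξ lam = (1 + (N:ℂ) * lam) / (((N:ℂ) - lam) * ((N:ℂ) ^ 2 + 1)) := by
    rw [gc, ← hN]
    field_simp
    ring
  have hnorm : ‖gc ξ lam‖ = ‖1 + (N:ℂ) * lam‖ / (‖(N:ℂ) - lam‖ * (N ^ 2 + 1)) := by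
    rw [hgc, norm_div, norm_mul]
    congr 2
    have : ((N : ℂ) ^ 2 + 1) = ((N ^ 2 + 1 : ℝ) : ℂ) := by push_cast; ring
    rw [this, Complex.norm_real, Real.norm_eq_abs, abs_of_pos hden2]
  have hnum : ‖1 + (N:ℂ) * lam‖ ≤ (1 + b) * (N + 1) := by
    calc ‖1 + (N:ℂ) * lam‖ ≤ ‖(1:ℂ)‖ + ‖(N:ℂ) * lam‖ := norm_add_le _ _
      _ = 1 + N * ‖lam‖ := by
          rw [norm_one, norm_mul, Complex.norm_real, Real.norm_eq_abs, abs_of_nonneg hN0]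
      _ ≤ (1 + b) * (N + 1) := by nlinarith
  have hstep1 : ‖gc ξ lam‖ ≤ ((1 + b) * (N + 1)) / ((ε * (N + 1)) * (N ^ 2 + 1)) := by
    rw [hnorm]
    refine div_le_div₀ (by positivity) hnum (by positivity) ?_
    exact mul_le_mul_of_nonneg_right hd (le_of_lt hden2)
  have hstep2 : ((1 + b) * (N + 1)) / ((ε * (N + 1)) * (N ^ 2 + 1)) =
      (1 + b) / (ε * (N ^ 2 + 1)) := by
    rw [show (ε * (N + 1)) * (N ^ 2 + 1) = (N + 1) * (ε * (N ^ 2 + 1)) by ring,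
        show (1 + b) * (N + 1) = (N + 1) * (1 + b) by ring,
        mul_div_mul_left _ _ (by positivity : (N + 1) ≠ 0)]
  have hstep3 : (1 + b) / (ε * (N ^ 2 + 1)) ≤ (2 * (1 + b)) / (ε * (N + 1) ^ 2) := by
    rw [div_le_div_iff₀ (by positivity) (by positivity)]
    nlinarith [mul_nonneg (mul_nonneg hε.le (by linarith : (0:ℝ) ≤ 1 + b)) (sq_nonneg (N - 1))]
  have hstep4 : (2 * (1 + b)) / (ε * (N + 1) ^ 2) ≤ (2 * (1 + b) / ε) * bb ξ := by
    have hball : (0:ℝ) < ((ξ.1 : ℝ) ^ 2 + 1) * ((ξ.2 : ℝ) ^ 2 + 1) := by positivity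
    have : (2 * (1 + b) / ε) * bb ξ =
        (2 * (1 + b)) / (ε * (((ξ.1 : ℝ) ^ 2 + 1) * ((ξ.2 : ℝ) ^ 2 + 1))) := by
      rw [bb]; field_simp; try ring
    rw [this]
    refine div_le_div_of_nonneg_left (by positivity) (by positivity) ?_
    have := sq_bound ξ
    rw [← hN] at this
    nlinarith [hε.le]
  calc ‖gc ξ lam‖ ≤ ((1 + b) * (N + 1)) / ((ε * (N + 1)) * (N ^ 2 + 1)) := hstep1
    _ = (1 + b) / (ε * (N ^ 2 + 1)) := hstep2
    _ ≤ (2 * (1 + b)) / (ε * (N + 1) ^ 2) := hstep3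
    _ ≤ (2 * (1 + b) / ε) * bb ξ := hstep4

lemma finite_Nr_lt (M : ℝ) : {ξ : ℤ × ℤ | Nr ξ < M}.Finite := by
  obtain ⟨K, hK⟩ := exists_nat_ge M
  refine Set.Finite.subset (Set.finite_Icc ((-(K:ℤ), -(K:ℤ)) : ℤ × ℤ) ((K:ℤ), (K:ℤ))) ?_
  rintro ⟨x, y⟩ h
  simp only [Set.mem_setOf_eq, Nr] at h
  have hx2 : ((x:ℝ)) ^ 2 < K := by nlinarith [sq_nonneg (y:ℝ), (show M ≤ K from hK)]
  have hy2 : ((y:ℝ)) ^ 2 < K := by nlinarith [sq_nonneg (x:ℝ), (show M ≤ K from hK)]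
  have hx : |x| ≤ (K:ℤ) := by
    have h1 : |(x:ℝ)| ≤ (x:ℝ) ^ 2 + 1 := by nlinarith [sq_nonneg (|(x:ℝ)| - 1), sq_abs (x:ℝ), abs_nonneg (x:ℝ)]
    have : |(x:ℝ)| < (K:ℝ) + 1 := by nlinarith
    have h2 : ((|x| : ℤ) : ℝ) < (K:ℝ) + 1 := by rwa [Int.cast_abs]
    have h3 : |x| < (K:ℤ) + 1 := by exact_mod_cast h2
    omega
  have hy : |y| ≤ (K:ℤ) := by
    have h1 : |(y:ℝ)| ≤ (y:ℝ) ^ 2 + 1 := by nlinarith [sq_nonneg (|(y:ℝ)| - 1), sq_abs (y:ℝ), abs_nonneg (y:ℝ)]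
    have : |(y:ℝ)| < (K:ℝ) + 1 := by nlinarith
    have h2 : ((|y| : ℤ) : ℝ) < (K:ℝ) + 1 := by rwa [Int.cast_abs]
    have h3 : |y| < (K:ℤ) + 1 := by exact_mod_cast h2
    omega
  rw [Set.mem_Icc, abs_le] at *
  exact ⟨⟨hx.1, hy.1⟩, hx.2, hy.2⟩

lemma summable_gc (lam : ℂ) : Summable (fun ξ : ℤ × ℤ => gc ξ lam) := by
  set R := ‖lam‖ with hR
  have hR0 : 0 ≤ R := norm_nonneg _
  refine Summable.of_norm_bounded_eventually (g := fun ξ => (2 * (1 + R) / (1/2)) * bb ξ)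
    ((summable_bb.mul_left _)) ?_
  refine Set.Finite.subset (finite_Nr_lt (2*R+1)) ?_
  intro ξ hξ
  simp only [Set.mem_setOf_eq] at hξ ⊢
  by_contra hcon
  push_neg at hcon
  apply hξ
  refine norm_gc_le one_half_pos le_rfl ?_
  have h1 : ‖(Nr ξ : ℂ)‖ - ‖lam‖ ≤ ‖(Nr ξ : ℂ) - lam‖ := norm_sub_norm_le _ _
  have h2 : ‖(Nr ξ : ℂ)‖ = Nr ξ := by
    rw [Complex.norm_real, Real.norm_eq_abs, abs_of_nonneg (Nr_nonneg ξ)]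
  rw [h2] at h1
  nlinarith [hcon]

lemma g_cast (ξ : ℤ × ℤ) (lam : ℝ) : ((g ξ lam : ℝ) : ℂ) = gc ξ (lam : ℂ) := by
  rw [g, gc]
  push_cast
  ring

lemma abs_g_le {ξ : ℤ × ℤ} {lam ε b : ℝ} (hε : 0 < ε) (hb : |lam| ≤ b)
    (hd : ε * (Nr ξ + 1) ≤ |Nr ξ - lam|) :
    |g ξ lam| ≤ (2 * (1 + b) / ε) * bb ξ := by
  have h1 : ‖gc ξ (lam : ℂ)‖ ≤ (2 * (1 + b) / ε) * bb ξ := by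
    refine norm_gc_le hε (by rwa [Complex.norm_real, Real.norm_eq_abs]) ?_
    have : ((Nr ξ : ℂ) - (lam : ℂ)) = ((Nr ξ - lam : ℝ) : ℂ) := by push_cast; ring
    rw [this, Complex.norm_real, Real.norm_eq_abs]
    exact hd
  rw [← g_cast, Complex.norm_real, Real.norm_eq_abs] at h1
  exact h1

/-- Every lattice point has norm `≤ nk` or `≥ nk1`. -/
lemma norm_dichotomy (nk nk1 : ℕ)
    (hconsec : ∀ m : ℕ, IsNormZ2 m → nk < m → nk1 ≤ m) (ξ : ℤ × ℤ) :
    Nr ξ ≤ nk ∨ (nk1 : ℝ) ≤ Nr ξ := by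
  by_cases h : mNat ξ ≤ nk
  · left; rw [← mNat_cast]; exact_mod_cast h
  · right
    have := hconsec (mNat ξ) (isNormZ2_mNat ξ) (lt_of_not_ge h)
    rw [← mNat_cast]; exact_mod_cast this

lemma exists_bound (nk nk1 : ℕ)
    (hconsec : ∀ m : ℕ, IsNormZ2 m → nk < m → nk1 ≤ m)
    {a b : ℝ} (ha : (nk : ℝ) < a) (hb : b < (nk1 : ℝ)) (hab : a ≤ b) :
    ∃ C > 0, ∀ ξ : ℤ × ℤ, ∀ lam ∈ Set.Icc a b, |g ξ lam| ≤ C * bb ξ := by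
  have hnk0 : (0:ℝ) ≤ (nk : ℝ) := Nat.cast_nonneg _
  have ha0 : 0 < a := lt_of_le_of_lt hnk0 ha
  have hb0 : 0 < b := lt_of_lt_of_le ha0 hab
  set ε0 : ℝ := min (a - nk) ((nk1 : ℝ) - b) with hε0
  have hε0pos : 0 < ε0 := lt_min (by linarith) (by linarith)
  have hε0a : ε0 ≤ a - nk := min_le_left _ _
  have hε0b : ε0 ≤ (nk1 : ℝ) - b := min_le_right _ _
  set ε : ℝ := ε0 / (2 * (b + 1)) with hε
  have hεpos : 0 < ε := by positivity
  refine ⟨2 * (1 + b) / ε, by positivity, ?_⟩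
  intro ξ lam hlam
  obtain ⟨hla, hlb⟩ := hlam
  have habs : |lam| ≤ b := abs_le.2 ⟨by linarith, hlb⟩
  refine abs_g_le hεpos habs ?_
  have hN0 : 0 ≤ Nr ξ := Nr_nonneg ξ
  have hεle : ε * (2 * (b + 1)) = ε0 := by
    rw [hε]; field_simp
  rcases norm_dichotomy nk nk1 hconsec ξ with hcase | hcase
  · -- Nr ξ ≤ nk < a ≤ lam
    have habs2 : |Nr ξ - lam| = lam - Nr ξ := by
      rw [abs_of_nonpos (by linarith)]; ring
    rw [habs2]
    have h1 : ε * (Nr ξ + 1) ≤ ε * (2 * (b + 1)) := by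
      refine mul_le_mul_of_nonneg_left ?_ hεpos.le
      linarith
    rw [hεle] at h1
    linarith
  · -- nk1 ≤ Nr ξ, lam ≤ b < nk1 ≤ Nr ξ
    have habs2 : |Nr ξ - lam| = Nr ξ - lam := by
      rw [abs_of_nonneg (by linarith)]
    rw [habs2]
    by_cases hbig : Nr ξ ≤ 2 * b + 1
    · have h1 : ε * (Nr ξ + 1) ≤ ε * (2 * (b + 1)) := by
        refine mul_le_mul_of_nonneg_left ?_ hεpos.le
        linarith
      rw [hεle] at h1
      linarith
    · push_neg at hbig
      have hhalf : ε ≤ 1 / 2 := by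
        rw [hε, div_le_div_iff₀ (by positivity) (by norm_num)]
        linarith
      have h1 : ε * (Nr ξ + 1) ≤ (1 / 2) * (Nr ξ + 1) :=
        mul_le_mul_of_nonneg_right hhalf (by linarith)
      linarith

lemma summable_g (nk nk1 : ℕ)
    (hconsec : ∀ m : ℕ, IsNormZ2 m → nk < m → nk1 ≤ m)
    {lam : ℝ} (hlam : lam ∈ Set.Ioo (nk : ℝ) (nk1 : ℝ)) :
    Summable (fun ξ : ℤ × ℤ => g ξ lam) := by
  obtain ⟨C, hC, hbd⟩ := exists_bound nk nk1 hconsec hlam.1 hlam.2 le_rfl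
  refine Summable.of_norm_bounded (g := fun ξ => C * bb ξ) (summable_bb.mul_left _) ?_
  intro ξ
  rw [Real.norm_eq_abs]
  exact hbd ξ lam ⟨le_rfl, le_rfl⟩

lemma g_mono (nk nk1 : ℕ)
    (hconsec : ∀ m : ℕ, IsNormZ2 m → nk < m → nk1 ≤ m)
    {x y : ℝ} (hx : x ∈ Set.Ioo (nk : ℝ) (nk1 : ℝ)) (hy : y ∈ Set.Ioo (nk : ℝ) (nk1 : ℝ))
    (hxy : x ≤ y) (ξ : ℤ × ℤ) : g ξ x ≤ g ξ y := by
  rw [g, g]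
  have key : 1 / (Nr ξ - x) ≤ 1 / (Nr ξ - y) := by
    rcases norm_dichotomy nk nk1 hconsec ξ with hcase | hcase
    · refine one_div_le_one_div_of_neg_of_le (by linarith [hx.1] : Nr ξ - x < 0) (by linarith)
    · refine one_div_le_one_div_of_le (by linarith [hy.2] : 0 < Nr ξ - y) (by linarith)
  linarith

lemma g_strict {x y : ℝ} (hx0 : 0 < x) (hxy : x < y) : g (0, 0) x < g (0, 0) y := by
  have hN : Nr (0, 0) = 0 := by simp [Nr]
  rw [g, g, hN]
  have h1 : 1 / (0 - x) < 1 / (0 - y) := by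
    rw [show (0:ℝ) - x = -x by ring, show (0:ℝ) - y = -y by ring, one_div_neg_eq_neg_one_div,
      one_div_neg_eq_neg_one_div, neg_lt_neg_iff]
    exact one_div_lt_one_div_of_lt hx0 hxy
  linarith

lemma summable_ite_zero {f : ℤ × ℤ → ℝ} (hf : Summable f) (ξ₀ : ℤ × ℤ) :
    Summable (fun ξ => if ξ = ξ₀ then 0 else f ξ) := by
  have h1 : Summable (fun ξ : ℤ × ℤ => if ξ = ξ₀ then f ξ₀ else 0) :=
    (hasSum_ite_eq ξ₀ (f ξ₀)).summable
  refine (hf.sub h1).congr fun ξ => ?_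
  by_cases h : ξ = ξ₀ <;> simp [h]

lemma spectralF_fun_eq : spectralF = fun lam => ∑' ξ : ℤ × ℤ, g ξ lam := rfl

lemma strictMonoOn_F (nk nk1 : ℕ)
    (hconsec : ∀ m : ℕ, IsNormZ2 m → nk < m → nk1 ≤ m) :
    StrictMonoOn spectralF (Set.Ioo (nk : ℝ) (nk1 : ℝ)) := by
  intro x hx y hy hxy
  rw [spectralF_eq, spectralF_eq]
  exact Summable.tsum_lt_tsum (fun ξ => g_mono nk nk1 hconsec hx hy hxy.le ξ)
    (g_strict (lt_of_le_of_lt (Nat.cast_nonneg nk) hx.1) hxy)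
    (summable_g nk nk1 hconsec hx) (summable_g nk nk1 hconsec hy)

lemma continuousOn_F (nk nk1 : ℕ)
    (hconsec : ∀ m : ℕ, IsNormZ2 m → nk < m → nk1 ≤ m) :
    ContinuousOn spectralF (Set.Ioo (nk : ℝ) (nk1 : ℝ)) := by
  intro x hx
  set a : ℝ := ((nk : ℝ) + x) / 2 with ha_def
  set b : ℝ := (x + (nk1 : ℝ)) / 2 with hb_def
  have hx1 := hx.1
  have hx2 := hx.2
  have ha : (nk : ℝ) < a := by rw [ha_def]; linarith
  have hax : a < x := by rw [ha_def]; linarith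
  have hxb : x < b := by rw [hb_def]; linarith
  have hb : b < (nk1 : ℝ) := by rw [hb_def]; linarith
  obtain ⟨C, hC, hbd⟩ := exists_bound nk nk1 hconsec ha hb (by linarith)
  have hcont : ContinuousOn (fun lam => ∑' ξ : ℤ × ℤ, g ξ lam) (Set.Icc a b) := by
    refine continuousOn_tsum (fun ξ => ?_) (summable_bb.mul_left C)
      (fun ξ lam hlam => by rw [Real.norm_eq_abs]; exact hbd ξ lam hlam)
    have hden : ∀ lam ∈ Set.Icc a b, Nr ξ - lam ≠ 0 := by
      intro lam hlam
      rcases norm_dichotomy nk nk1 hconsec ξ with h | h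
      · exact ne_of_lt (by have := hlam.1; linarith)
      · exact ne_of_gt (by have := hlam.2; linarith)
    exact ((continuousOn_const.div
      ((continuous_const.sub continuous_id).continuousOn) hden).sub continuousOn_const)
  rw [spectralF_fun_eq]
  exact (hcont.continuousAt (Icc_mem_nhds hax hxb)).continuousWithinAt

lemma Nr_of_isNorm {n : ℕ} {ξ : ℤ × ℤ} (h : (n : ℤ) = ξ.1 ^ 2 + ξ.2 ^ 2) :
    Nr ξ = (n : ℝ) := by
  have h2 : ((n : ℤ) : ℝ) = ((ξ.1 ^ 2 + ξ.2 ^ 2 : ℤ) : ℝ) := by rw [h]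
  push_cast at h2
  rw [Nr]
  linarith

lemma tendsto_one_div_sub_atBot (v : ℝ) :
    Tendsto (fun lam : ℝ => 1 / (v - lam)) (nhdsWithin v (Set.Ioi v)) atBot := by
  have h1 : Tendsto (fun lam : ℝ => lam - v) (nhdsWithin v (Set.Ioi v)) (nhdsWithin 0 (Set.Ioi 0)) := by
    apply tendsto_nhdsWithin_of_tendsto_nhds_of_eventually_within
    · have hc : Tendsto (fun lam : ℝ => lam - v) (nhds v) (nhds (v - v)) :=
        (continuous_id.sub continuous_const).tendsto v
      rw [sub_self] at hc
      exact hc.mono_left nhdsWithin_le_nhds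
    · filter_upwards [self_mem_nhdsWithin] with lam hlam
      exact sub_pos.2 (Set.mem_Ioi.1 hlam)
  have h2 : Tendsto (fun lam : ℝ => (lam - v)⁻¹) (nhdsWithin v (Set.Ioi v)) atTop :=
    tendsto_inv_nhdsGT_zero.comp h1
  have h3 := tendsto_neg_atTop_atBot.comp h2
  refine h3.congr fun lam => ?_
  simp only [Function.comp_apply]
  rw [one_div, ← inv_neg, neg_sub]

lemma tendsto_one_div_sub_atTop (v : ℝ) :
    Tendsto (fun lam : ℝ => 1 / (v - lam)) (nhdsWithin v (Set.Iio v)) atTop := by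
  have h1 : Tendsto (fun lam : ℝ => v - lam) (nhdsWithin v (Set.Iio v)) (nhdsWithin 0 (Set.Ioi 0)) := by
    apply tendsto_nhdsWithin_of_tendsto_nhds_of_eventually_within
    · have hc : Tendsto (fun lam : ℝ => v - lam) (nhds v) (nhds (v - v)) :=
        (continuous_const.sub continuous_id).tendsto v
      rw [sub_self] at hc
      exact hc.mono_left nhdsWithin_le_nhds
    · filter_upwards [self_mem_nhdsWithin] with lam hlam
      exact sub_pos.2 (Set.mem_Iio.1 hlam)
  have h2 : Tendsto (fun lam : ℝ => (v - lam)⁻¹) (nhdsWithin v (Set.Iio v)) atTop :=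
    tendsto_inv_nhdsGT_zero.comp h1
  refine h2.congr fun lam => (one_div _).symm

lemma tendsto_F_bot (nk nk1 : ℕ) (hk : IsNormZ2 nk) (hlt : nk < nk1)
    (hconsec : ∀ m : ℕ, IsNormZ2 m → nk < m → nk1 ≤ m) :
    Tendsto spectralF (nhdsWithin (nk : ℝ) (Set.Ioi (nk : ℝ))) atBot := by
  obtain ⟨ξ₀, hξ₀⟩ := hk
  have hN : Nr ξ₀ = (nk : ℝ) := Nr_of_isNorm hξ₀
  have hcast : (nk : ℝ) < (nk1 : ℝ) := by exact_mod_cast hlt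
  set c0 : ℝ := ((nk : ℝ) + (nk1 : ℝ)) / 2 with hc0_def
  have hc0 : c0 ∈ Set.Ioo (nk : ℝ) (nk1 : ℝ) := ⟨by rw [hc0_def]; linarith, by rw [hc0_def]; linarith⟩
  set r : ℝ → ℝ := fun lam => ∑' ξ : ℤ × ℤ, if ξ = ξ₀ then 0 else g ξ lam with hr_def
  have hsplit : ∀ lam ∈ Set.Ioo (nk : ℝ) (nk1 : ℝ), spectralF lam = g ξ₀ lam + r lam := by
    intro lam hlam
    rw [spectralF_eq]
    exact Summable.tsum_eq_add_tsum_ite (summable_g nk nk1 hconsec hlam) ξ₀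
  have hrmono : ∀ lam ∈ Set.Ioo (nk : ℝ) (nk1 : ℝ), lam ≤ c0 → r lam ≤ r c0 := by
    intro lam hlam hle
    refine Summable.tsum_le_tsum (fun ξ => ?_)
      (summable_ite_zero (summable_g nk nk1 hconsec hlam) ξ₀)
      (summable_ite_zero (summable_g nk nk1 hconsec hc0) ξ₀)
    by_cases h : ξ = ξ₀
    · simp [h]
    · simp only [h, if_false]
      exact g_mono nk nk1 hconsec hlam hc0 hle ξ
  have hbound : ∀ lam ∈ Set.Ioo (nk : ℝ) c0,
      spectralF lam ≤ 1 / ((nk : ℝ) - lam) + (r c0 - (nk : ℝ) / ((nk : ℝ) ^ 2 + 1)) := by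
    intro lam hlam
    have hlam' : lam ∈ Set.Ioo (nk : ℝ) (nk1 : ℝ) := ⟨hlam.1, lt_trans hlam.2 hc0.2⟩
    rw [hsplit lam hlam', g, hN]
    have := hrmono lam hlam' hlam.2.le
    linarith
  have hlim : Tendsto (fun lam => 1 / ((nk : ℝ) - lam) + (r c0 - (nk : ℝ) / ((nk : ℝ) ^ 2 + 1)))
      (nhdsWithin (nk : ℝ) (Set.Ioi (nk : ℝ))) atBot :=
    tendsto_atBot_add_const_right _ _ (tendsto_one_div_sub_atBot (nk : ℝ))
  refine tendsto_atBot_mono' _ ?_ hlim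
  filter_upwards [Ioo_mem_nhdsGT hc0.1] with lam hlam
  exact hbound lam hlam

lemma tendsto_F_top (nk nk1 : ℕ) (hk1 : IsNormZ2 nk1) (hlt : nk < nk1)
    (hconsec : ∀ m : ℕ, IsNormZ2 m → nk < m → nk1 ≤ m) :
    Tendsto spectralF (nhdsWithin (nk1 : ℝ) (Set.Iio (nk1 : ℝ))) atTop := by
  obtain ⟨ξ₁, hξ₁⟩ := hk1
  have hN : Nr ξ₁ = (nk1 : ℝ) := Nr_of_isNorm hξ₁
  have hcast : (nk : ℝ) < (nk1 : ℝ) := by exact_mod_cast hlt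
  set c0 : ℝ := ((nk : ℝ) + (nk1 : ℝ)) / 2 with hc0_def
  have hc0 : c0 ∈ Set.Ioo (nk : ℝ) (nk1 : ℝ) := ⟨by rw [hc0_def]; linarith, by rw [hc0_def]; linarith⟩
  set r : ℝ → ℝ := fun lam => ∑' ξ : ℤ × ℤ, if ξ = ξ₁ then 0 else g ξ lam with hr_def
  have hsplit : ∀ lam ∈ Set.Ioo (nk : ℝ) (nk1 : ℝ), spectralF lam = g ξ₁ lam + r lam := by
    intro lam hlam
    rw [spectralF_eq]
    exact Summable.tsum_eq_add_tsum_ite (summable_g nk nk1 hconsec hlam) ξ₁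
  have hrmono : ∀ lam ∈ Set.Ioo (nk : ℝ) (nk1 : ℝ), c0 ≤ lam → r c0 ≤ r lam := by
    intro lam hlam hle
    refine Summable.tsum_le_tsum (fun ξ => ?_)
      (summable_ite_zero (summable_g nk nk1 hconsec hc0) ξ₁)
      (summable_ite_zero (summable_g nk nk1 hconsec hlam) ξ₁)
    by_cases h : ξ = ξ₁
    · simp [h]
    · simp only [h, if_false]
      exact g_mono nk nk1 hconsec hc0 hlam hle ξ
  have hbound : ∀ lam ∈ Set.Ioo c0 (nk1 : ℝ),
      1 / ((nk1 : ℝ) - lam) + (r c0 - (nk1 : ℝ) / ((nk1 : ℝ) ^ 2 + 1)) ≤ spectralF lam := by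
    intro lam hlam
    have hlam' : lam ∈ Set.Ioo (nk : ℝ) (nk1 : ℝ) := ⟨lt_trans hc0.1 hlam.1, hlam.2⟩
    rw [hsplit lam hlam', g, hN]
    have := hrmono lam hlam' hlam.1.le
    linarith
  have hlim : Tendsto (fun lam => 1 / ((nk1 : ℝ) - lam) + (r c0 - (nk1 : ℝ) / ((nk1 : ℝ) ^ 2 + 1)))
      (nhdsWithin (nk1 : ℝ) (Set.Iio (nk1 : ℝ))) atTop :=
    tendsto_atTop_add_const_right _ _ (tendsto_one_div_sub_atTop (nk1 : ℝ))
  refine tendsto_atTop_mono' _ ?_ hlim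
  filter_upwards [Ioo_mem_nhdsLT hc0.2] with lam hlam
  exact hbound lam hlam

end SpectralAux

open SpectralAux

/-- The spectral function converges absolutely off the norms, is strictly
increasing between consecutive norms with poles `−∞`/`+∞` at the endpoints,
and hence takes each real value `c` exactly once in each interval between
consecutive norms: the solutions interlace with the norms. -/
theorem spectral_function_interlacing
    (nk nk1 : ℕ) (hk : IsNormZ2 nk) (hk1 : IsNormZ2 nk1) (hlt : nk < nk1)
    (hconsec : ∀ m : ℕ, IsNormZ2 m → nk < m → nk1 ≤ m) :
    (∀ lam : ℂ, (∀ n : ℕ, IsNormZ2 n → (n : ℂ) ≠ lam) →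
      Summable (fun ξ : ℤ × ℤ =>
        1 / ((((ξ.1 : ℝ) ^ 2 + (ξ.2 : ℝ) ^ 2 : ℝ) : ℂ) - lam) -
          (((ξ.1 : ℝ) ^ 2 + (ξ.2 : ℝ) ^ 2 : ℝ) : ℂ) /
            ((((ξ.1 : ℝ) ^ 2 + (ξ.2 : ℝ) ^ 2 : ℝ) : ℂ) ^ 2 + 1))) ∧
    StrictMonoOn spectralF (Set.Ioo (nk : ℝ) (nk1 : ℝ)) ∧
    Tendsto spectralF (nhdsWithin (nk : ℝ) (Set.Ioi (nk : ℝ))) atBot ∧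
    Tendsto spectralF (nhdsWithin (nk1 : ℝ) (Set.Iio (nk1 : ℝ))) atTop ∧
    ∀ c : ℝ, ∃! lam : ℝ, lam ∈ Set.Ioo (nk : ℝ) (nk1 : ℝ) ∧ spectralF lam = c := by
  have hcast : (nk : ℝ) < (nk1 : ℝ) := by exact_mod_cast hlt
  refine ⟨?_, strictMonoOn_F nk nk1 hconsec, tendsto_F_bot nk nk1 hk hlt hconsec,
    tendsto_F_top nk nk1 hk1 hlt hconsec, ?_⟩
  · intro lam _
    exact (summable_gc lam).congr fun ξ => by rw [gc, Nr]
  · intro c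
    have hmono := strictMonoOn_F nk nk1 hconsec
    have hBot := tendsto_F_bot nk nk1 hk hlt hconsec
    have hTop := tendsto_F_top nk nk1 hk1 hlt hconsec
    obtain ⟨a', hFa', ha'⟩ := ((hBot.eventually (eventually_lt_atBot c)).and
      (Filter.eventually_mem_set.2 (Ioo_mem_nhdsGT hcast))).exists
    obtain ⟨b', hFb', hb'⟩ := ((hTop.eventually (eventually_gt_atTop c)).and
      (Filter.eventually_mem_set.2 (Ioo_mem_nhdsLT hcast))).exists
    have hab : a' < b' := by
      by_contra h
      push_neg at h
      have : spectralF b' ≤ spectralF a' := by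
        rcases eq_or_lt_of_le h with h' | h'
        · rw [h']
        · exact (hmono hb' ha' h').le
      linarith
    have hsub : Set.Icc a' b' ⊆ Set.Ioo (nk : ℝ) (nk1 : ℝ) :=
      Set.Icc_subset_Ioo ha'.1 hb'.2
    obtain ⟨lam, hlamIcc, hFlam⟩ := intermediate_value_Icc hab.le
      ((continuousOn_F nk nk1 hconsec).mono hsub) ⟨hFa'.le, hFb'.le⟩
    refine ⟨lam, ⟨hsub hlamIcc, hFlam⟩, ?_⟩
    intro y hy
    exact hmono.injOn hy.1 (hsub hlamIcc) (by rw [hy.2, hFlam])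
end
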